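/- If x is a numeric pregame with birthday g(x) = 2 and y is a finite-born numeric pregame with birthday g(y) = m, then the birthday of their product is g(x·y) = m(m+1). -/

import Mathlib

universe u

namespace SetTheory

/-- Pre-games, as in the older Mathlib (`SetTheory.PGame`, removed from Mathlib since). -/
inductive PGame : Type (u + 1)
  | mk : ∀ α β : Type u, (α → PGame) → (β → PGame) → PGame

namespace PGame

/-- The pair `(x ≤ y, x ⧏ y)`, by the recursive characterization of the older Mathlib. -/
noncomputable def leLf : PGame.{u} → PGame.{u} → Prop × Prop
  | mk _ _ xL xR => fun y => PGame.rec (motive := fun _ => Prop × Prop)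
      (fun γ δ yL yR ihL ihR =>
        ((∀ i, (leLf (xL i) (mk γ δ yL yR)).2) ∧ (∀ j, (ihR j).2),
          (∃ k, (ihL k).1) ∨ (∃ j, (leLf (xR j) (mk γ δ yL yR)).1))) y

noncomputable instance : LE PGame.{u} :=
  ⟨fun x y => (leLf x y).1⟩

noncomputable instance : LT PGame.{u} :=
  ⟨fun x y => x ≤ y ∧ ¬ y ≤ x⟩

def Numeric : PGame → Prop
  | ⟨_, _, L, R⟩ => (∀ i j, L i < R j) ∧ (∀ i, Numeric (L i)) ∧ ∀ j, Numeric (R j)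

def neg : PGame → PGame
  | ⟨l, r, L, R⟩ => ⟨r, l, fun i => neg (R i), fun i => neg (L i)⟩

instance : Neg PGame :=
  ⟨neg⟩

noncomputable instance : Add PGame.{u} :=
  ⟨fun x y => by
    induction x generalizing y with | mk xl xr _ _ IHxl IHxr => _
    induction y with | mk yl yr yL yR IHyl IHyr => _
    have y := mk yl yr yL yR
    refine ⟨xl ⊕ yl, xr ⊕ yr, Sum.rec ?_ ?_, Sum.rec ?_ ?_⟩
    · exact fun i => IHxl i y
    · exact IHyl
    · exact fun i => IHxr i y
    · exact IHyr⟩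

noncomputable instance : Sub PGame :=
  ⟨fun x y => x + -y⟩

noncomputable instance : Mul PGame.{u} :=
  ⟨fun x y => by
    induction x generalizing y with | mk xl xr _ _ IHxl IHxr => _
    induction y with | mk yl yr yL yR IHyl IHyr => _
    have y := mk yl yr yL yR
    refine ⟨(xl × yl) ⊕ (xr × yr), (xl × yr) ⊕ (xr × yl), ?_, ?_⟩ <;> rintro (⟨i, j⟩ | ⟨i, j⟩)
    exacts [IHxl i y + IHyl j - IHxl i (yL j), IHxr i y + IHyr j - IHxr i (yR j),
      IHxl i y + IHyr j - IHxl i (yR j), IHxr i y + IHyl j - IHxr i (yL j)]⟩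

noncomputable def birthday : PGame.{u} → Ordinal.{u}
  | ⟨_, _, xL, xR⟩ =>
    max (Ordinal.lsub.{u, u} fun i => birthday (xL i)) (Ordinal.lsub.{u, u} fun i => birthday (xR i))

end PGame

end SetTheory

/-!
For finite-born pregames the birthday of `x * y` depends only on the birthdays `n`, `m` of the
factors. Every option of `x * y` is `a * y + x * b - a * b` for options `a`, `b` of `x`, `y`, and
birthdays of finite-born pregames add under `+` and are preserved by negation. So if `a`, `b` are
born on days `p < n`, `q < m`, induction shows that this option is born on day
`F p m + F n q + F p q`, where `F = birthdayMul`. This is largest for `p = n - 1`, `q = m - 1`,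
which are attained, so `F` obeys the recursion defining `birthdayMul`, and `F 2 m = m (m + 1)`.
-/

namespace SetTheory.PGame

def options : PGame.{u} → Set PGame.{u}
  | mk _ _ L R => Set.range L ∪ Set.range R

theorem birthday_le_iff {x : PGame.{u}} {o : Ordinal.{u}} :
    x.birthday ≤ o ↔ ∀ a ∈ x.options, a.birthday < o := by
  obtain ⟨xl, xr, xL, xR⟩ := x
  simp only [birthday, options, max_le_iff, Ordinal.lsub_le_iff, Set.mem_union, or_imp,
    forall_and, Set.forall_mem_range]

theorem lt_birthday_iff {x : PGame.{u}} {o : Ordinal.{u}} :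
    o < x.birthday ↔ ∃ a ∈ x.options, o ≤ a.birthday := by
  obtain ⟨xl, xr, xL, xR⟩ := x
  simp only [birthday, options, lt_max_iff, Ordinal.lt_lsub_iff, Set.mem_union, or_and_right,
    exists_or, Set.exists_range_iff]

theorem birthday_lt_of_mem_options {a x : PGame.{u}} (h : a ∈ x.options) :
    a.birthday < x.birthday :=
  lt_birthday_iff.2 ⟨a, h, le_rfl⟩

theorem birthday_neg (x : PGame.{u}) : (-x).birthday = x.birthday := by
  induction x with
  | mk xl xr xL xR ihL ihR =>
  show (mk xr xl (fun i => -(xR i)) (fun i => -(xL i))).birthday = _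
  simp only [birthday, ihL, ihR, max_comm]

theorem mk_add_mk {xl xr yl yr : Type u} (xL : xl → PGame) (xR : xr → PGame) (yL : yl → PGame)
    (yR : yr → PGame) :
    mk xl xr xL xR + mk yl yr yL yR =
      mk (xl ⊕ yl) (xr ⊕ yr)
        (Sum.elim (fun i => xL i + mk yl yr yL yR) fun j => mk xl xr xL xR + yL j)
        (Sum.elim (fun i => xR i + mk yl yr yL yR) fun j => mk xl xr xL xR + yR j) :=
  rfl

theorem mk_mul_mk {xl xr yl yr : Type u} (xL : xl → PGame) (xR : xr → PGame) (yL : yl → PGame)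
    (yR : yr → PGame) :
    mk xl xr xL xR * mk yl yr yL yR =
      let x := mk xl xr xL xR
      let y := mk yl yr yL yR
      mk ((xl × yl) ⊕ (xr × yr)) ((xl × yr) ⊕ (xr × yl))
        (Sum.elim (fun p => xL p.1 * y + x * yL p.2 - xL p.1 * yL p.2)
          fun p => xR p.1 * y + x * yR p.2 - xR p.1 * yR p.2)
        (Sum.elim (fun p => xL p.1 * y + x * yR p.2 - xL p.1 * yR p.2)
          fun p => xR p.1 * y + x * yL p.2 - xR p.1 * yL p.2) :=
  rfl

theorem options_add (x y : PGame.{u}) :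
    (x + y).options = (· + y) '' x.options ∪ (x + ·) '' y.options := by
  obtain ⟨xl, xr, xL, xR⟩ := x
  obtain ⟨yl, yr, yL, yR⟩ := y
  rw [mk_add_mk]
  simp only [options, Set.Sum.elim_range, Set.image_union, ← Set.range_comp]
  exact Set.union_union_union_comm ..

theorem options_mul (x y : PGame.{u}) :
    (x * y).options = Set.image2 (fun a b => a * y + x * b - a * b) x.options y.options := by
  obtain ⟨xl, xr, xL, xR⟩ := x
  obtain ⟨yl, yr, yL, yR⟩ := y
  rw [mk_mul_mk]
  simp only [options, Set.Sum.elim_range, Set.image2_union_left, Set.image2_union_right,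
    Set.image2_range]
  ac_rfl

theorem exists_mem_options_birthday_eq {x : PGame.{u}} {n : ℕ} (h : x.birthday = ↑(n + 1)) :
    ∃ a ∈ x.options, a.birthday = n := by
  obtain ⟨a, ha, hle⟩ := lt_birthday_iff.1 (h ▸ Nat.cast_lt.2 n.lt_succ_self)
  refine ⟨a, ha, le_antisymm ?_ hle⟩
  have hlt := h ▸ birthday_lt_of_mem_options ha
  rwa [Nat.cast_succ, Order.lt_add_one_iff] at hlt

theorem exists_birthday_eq_of_mem_options {a x : PGame.{u}} {n : ℕ} (ha : a ∈ x.options)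
    (hx : x.birthday = n) : ∃ k < n, a.birthday = k := by
  have hlt := hx ▸ birthday_lt_of_mem_options ha
  obtain ⟨k, hk⟩ := Ordinal.lt_omega0.1 (hlt.trans (Ordinal.natCast_lt_omega0 n))
  exact ⟨k, by rwa [hk, Nat.cast_lt] at hlt, hk⟩

theorem natCast_succ_le_birthday {a x : PGame.{u}} {k : ℕ} (ha : a ∈ x.options)
    (hk : a.birthday = k) : ((k + 1 : ℕ) : Ordinal) ≤ x.birthday := by
  rw [Nat.cast_succ, Order.add_one_le_iff, ← hk]
  exact birthday_lt_of_mem_options ha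

theorem birthday_add_of_natCast {x y : PGame.{u}} {p q : ℕ} (hx : x.birthday = p)
    (hy : y.birthday = q) : (x + y).birthday = ↑(p + q) := by
  induction h : p + q using Nat.strong_induction_on generalizing x y p q with
  | _ N ih =>
  subst h
  refine le_antisymm (birthday_le_iff.2 ?_) ?_
  · rw [options_add]
    rintro _ (⟨a, ha, rfl⟩ | ⟨b, hb, rfl⟩)
    · obtain ⟨k, hk, hak⟩ := exists_birthday_eq_of_mem_options ha hx
      rw [ih _ (by omega) hak hy rfl, Nat.cast_lt]
      omega
    · obtain ⟨k, hk, hbk⟩ := exists_birthday_eq_of_mem_options hb hy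
      rw [ih _ (by omega) hx hbk rfl, Nat.cast_lt]
      omega
  · have hmem_left {a} (ha : a ∈ x.options) : a + y ∈ (x + y).options := by
      rw [options_add]; exact Or.inl ⟨a, ha, rfl⟩
    have hmem_right {b} (hb : b ∈ y.options) : x + b ∈ (x + y).options := by
      rw [options_add]; exact Or.inr ⟨b, hb, rfl⟩
    rcases p with _ | p
    · rcases q with _ | q
      · simp
      obtain ⟨b, hb, hbq⟩ := exists_mem_options_birthday_eq hy
      convert natCast_succ_le_birthday (hmem_right hb) (ih (0 + q) (by omega) hx hbq rfl) using 2
      omega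
    obtain ⟨a, ha, hap⟩ := exists_mem_options_birthday_eq hx
    convert natCast_succ_le_birthday (hmem_left ha) (ih (p + q) (by omega) hap hy rfl) using 2
    omega

theorem birthday_add_sub_of_natCast {a b c : PGame.{u}} {p q r : ℕ} (ha : a.birthday = p)
    (hb : b.birthday = q) (hc : c.birthday = r) : (a + b - c).birthday = ↑(p + q + r) :=
  birthday_add_of_natCast (birthday_add_of_natCast ha hb) ((birthday_neg c).trans hc)

/-- `2 * birthdayMul n m + 1` is the Delannoy number `D(n, m)`. -/
def birthdayMul : ℕ → ℕ → ℕ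
  | 0, _ => 0
  | _ + 1, 0 => 0
  | n + 1, m + 1 => birthdayMul n (m + 1) + birthdayMul (n + 1) m + birthdayMul n m + 1

@[simp]
theorem birthdayMul_zero_left (m : ℕ) : birthdayMul 0 m = 0 := by
  simp [birthdayMul]

@[simp]
theorem birthdayMul_zero_right (n : ℕ) : birthdayMul n 0 = 0 := by
  cases n <;> simp [birthdayMul]

theorem birthdayMul_succ_succ (n m : ℕ) :
    birthdayMul (n + 1) (m + 1) =
      birthdayMul n (m + 1) + birthdayMul (n + 1) m + birthdayMul n m + 1 := by
  simp [birthdayMul]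

theorem birthdayMul_mono_left (m : ℕ) : Monotone (birthdayMul · m) := by
  refine monotone_nat_of_le_succ fun n => ?_
  cases m with
  | zero => simp
  | succ m => rw [birthdayMul_succ_succ]; omega

theorem birthdayMul_mono_right (n : ℕ) : Monotone (birthdayMul n) := by
  refine monotone_nat_of_le_succ fun m => ?_
  cases n with
  | zero => simp
  | succ n => rw [birthdayMul_succ_succ]; omega

theorem birthdayMul_add_lt {p n q m : ℕ} (hp : p < n) (hq : q < m) :
    birthdayMul p m + birthdayMul n q + birthdayMul p q < birthdayMul n m := by
  obtain ⟨n, rfl⟩ := Nat.exists_eq_add_one.2 (p.zero_le.trans_lt hp)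
  obtain ⟨m, rfl⟩ := Nat.exists_eq_add_one.2 (q.zero_le.trans_lt hq)
  have h₁ : birthdayMul p (m + 1) ≤ birthdayMul n (m + 1) :=
    birthdayMul_mono_left _ (Nat.le_of_lt_succ hp)
  have h₂ : birthdayMul (n + 1) q ≤ birthdayMul (n + 1) m :=
    birthdayMul_mono_right _ (Nat.le_of_lt_succ hq)
  have h₃ : birthdayMul p q ≤ birthdayMul n m :=
    (birthdayMul_mono_left q (Nat.le_of_lt_succ hp)).trans
      (birthdayMul_mono_right n (Nat.le_of_lt_succ hq))
  rw [birthdayMul_succ_succ]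
  omega

theorem birthdayMul_one (m : ℕ) : birthdayMul 1 m = m := by
  induction m with
  | zero => simp
  | succ m ih => rw [birthdayMul_succ_succ, ih]; simp

theorem birthdayMul_two (m : ℕ) : birthdayMul 2 m = m * (m + 1) := by
  induction m with
  | zero => simp
  | succ m ih => rw [birthdayMul_succ_succ, ih, birthdayMul_one, birthdayMul_one]; ring

theorem birthday_mul_of_natCast {x y : PGame.{u}} {n m : ℕ} (hx : x.birthday = n)
    (hy : y.birthday = m) : (x * y).birthday = birthdayMul n m := by
  induction h : n + m using Nat.strong_induction_on generalizing x y n m with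
  | _ N ih =>
  subst h
  have birthday_option {a b : PGame} {p q : ℕ} (ha : a.birthday = p) (hb : b.birthday = q)
      (hp : p < n) (hq : q < m) : (a * y + x * b - a * b).birthday =
        ↑(birthdayMul p m + birthdayMul n q + birthdayMul p q) :=
    birthday_add_sub_of_natCast (ih _ (by omega) ha hy rfl) (ih _ (by omega) hx hb rfl)
      (ih _ (by omega) ha hb rfl)
  refine le_antisymm (birthday_le_iff.2 ?_) ?_
  · rw [options_mul]
    rintro _ ⟨a, ha, b, hb, rfl⟩
    obtain ⟨p, hp, hap⟩ := exists_birthday_eq_of_mem_options ha hx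
    obtain ⟨q, hq, hbq⟩ := exists_birthday_eq_of_mem_options hb hy
    rw [birthday_option hap hbq hp hq, Nat.cast_lt]
    exact birthdayMul_add_lt hp hq
  · rcases n with _ | n
    · simp
    rcases m with _ | m
    · simp
    obtain ⟨a, ha, hap⟩ := exists_mem_options_birthday_eq hx
    obtain ⟨b, hb, hbq⟩ := exists_mem_options_birthday_eq hy
    rw [birthdayMul_succ_succ]
    exact natCast_succ_le_birthday (options_mul x y ▸ Set.mem_image2_of_mem ha hb)
      (birthday_option hap hbq n.lt_succ_self m.lt_succ_self)

end SetTheory.PGame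

open SetTheory PGame Ordinal

theorem birthday_mul_of_birthday_two_general (x y : PGame) (hx2 : x.birthday = 2) (m : ℕ)
    (hym : y.birthday = (m : Ordinal)) :
    (x * y).birthday = ((m * (m + 1) : ℕ) : Ordinal) := by
  rw [birthday_mul_of_natCast (n := 2) (by exact_mod_cast hx2) hym, birthdayMul_two]

theorem birthday_mul_of_birthday_two (x y : PGame) (hx : x.Numeric) (hy : y.Numeric)
    (hx2 : x.birthday = 2) (m : ℕ) (hym : y.birthday = (m : Ordinal)) :
    (x * y).birthday = ((m * (m + 1) : ℕ) : Ordinal) :=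
  birthday_mul_of_birthday_two_general x y hx2 m hym
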